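/- For every natural number n ≥ 1, every ε > 0 and every t > 0, the inequality ε·(1 + t) + (n/ε)^n · t^{−n} ≥ 1 holds. -/
import Mathlib

theorem stmt14 (n : ℕ) (hn : 1 ≤ n) (ε t : ℝ) (hε : 0 < ε) (ht : 0 < t) :
    1 ≤ ε * (1 + t) + ((n : ℝ) / ε) ^ n * t ^ (-(n : ℝ)) := by
  have hrpow : t ^ (-(n : ℝ)) = (t ^ n)⁻¹ := by
    rw [← Real.rpow_natCast t n, ← Real.rpow_neg ht.le]
  rw [hrpow]
  have hn1 : (1 : ℝ) ≤ n := by exact_mod_cast hn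
  have htn : (0 : ℝ) < t ^ n := pow_pos ht n
  rcases le_or_gt (n : ℝ) (ε * t) with h | h
  · have h1 : (1 : ℝ) ≤ ε * (1 + t) := by nlinarith
    have h2 : (0 : ℝ) ≤ ((n : ℝ) / ε) ^ n * (t ^ n)⁻¹ :=
      mul_nonneg (pow_nonneg (div_nonneg (by positivity) hε.le) n) (inv_nonneg.2 htn.le)
    linarith
  · have h1 : (1 : ℝ) ≤ ((n : ℝ) / ε) ^ n * (t ^ n)⁻¹ := by
      rw [← div_eq_mul_inv, div_pow, div_div]
      rw [le_div_iff₀ (by positivity), one_mul]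
      rw [← mul_pow]; exact pow_le_pow_left₀ (by positivity) h.le n
    nlinarith
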